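/- Assume the function g := g₁/g₂ is surjective from (0, ∞) onto (0, ∞) and satisfies g'(x) < 0 for all x > 0, and let 0 < α_* < α^* be given. Then there exists a constant κ₁ > 0 depending only on α_*, α^*, g₁ and g₂ (in particular independent of n and h) such that for every integer n ≥ 2 and every α ∈ I := [α_*, α^*], the map φ sending α to the unique positive solution of the discrete system (S) with parameter α satisfies ‖φ'(α)‖_∞ < κ₁, where ‖·‖_∞ denotes the maximum norm on ℝⁿ; consequently κ := max{‖φ'(α)‖_∞ : α ∈ I} < κ₁. -/

import Mathlib

open Finset

noncomputable def U (g1 : ℝ → ℝ) (h : ℝ) : ℕ → ℝ → ℝ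
  | 0, u => u
  | 1, u => u
  | 2, u => u + h ^ 2 / 2 * g1 u
  | k + 3, u => 2 * U g1 h (k + 2) u - U g1 h (k + 1) u + h ^ 2 * g1 (U g1 h (k + 2) u)

/-- `(α, u 1, …, u n)` is a positive solution of the discrete system (S). -/
def IsSolution (g1 g2 : ℝ → ℝ) (n : ℕ) (h α : ℝ) (u : ℕ → ℝ) : Prop :=
  (∀ k, 1 ≤ k → k ≤ n → 0 < u k) ∧
  u 2 - u 1 = h ^ 2 / 2 * g1 (u 1) ∧
  (∀ k, 2 ≤ k → k ≤ n - 1 → u (k + 1) - 2 * u k + u (k - 1) = h ^ 2 * g1 (u k)) ∧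
  u n - u (n - 1) + h ^ 2 / 2 * g1 (u n) = h * α * g2 (u n)

/-!
Shooting from `u₁ = s`, the recursion of (S) gives `uₖ = U k s`, and the sensitivities
`wₖ = ∂uₖ/∂s` satisfy `1 ≤ w₁ ≤ w₂ ≤ ⋯`. Convexity of `g₁` makes `g₁(uₖ)/wₖ` nondecreasing in `k`.
Differentiating the boundary condition in `α` along the branch `s = ψ(α)` of solutions gives
`D ψ' = h g₂(uₙ)` with `D g₁(uₙ) ≤ -h α wₙ Q(uₙ) < 0`, where `Q = g₂' g₁ - g₁' g₂ > 0` because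
`g = g₁/g₂` decreases; hence `‖φ'(α)‖ = wₙ |ψ'| ≤ F(uₙ)/α` with `F = g₁ g₂ / Q`.
The boundary condition alone also forces `α ≤ g(uₙ) ≤ α (1 + g₁'(uₙ))`; since `g` is a decreasing
bijection of `(0, ∞)`, this traps `uₙ` in a compact interval independent of `n`, on which `F` is
bounded.
-/

lemma ConvexOn.add_deriv_mul_sub_le {S : Set ℝ} {f : ℝ → ℝ} (hf : ConvexOn ℝ S f) {x y : ℝ}
    (hx : x ∈ S) (hy : y ∈ S) (hfx : DifferentiableAt ℝ f x) :
    f x + deriv f x * (y - x) ≤ f y := by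
  rcases lt_trichotomy x y with hxy | rfl | hxy
  · have := hf.deriv_le_slope hx hy hxy hfx
    rw [slope_def_field, le_div_iff₀ (sub_pos.2 hxy)] at this
    linarith
  · simp
  · have := hf.slope_le_deriv hy hx hxy hfx
    rw [slope_def_field, div_le_iff₀ (sub_pos.2 hxy)] at this
    linarith

lemma sub_le_mul_increment_of_monotone {a : ℕ → ℝ} (ha : Monotone fun k => a (k + 1) - a k)
    (k : ℕ) : a (k + 1) - a 1 ≤ k * (a (k + 1) - a k) := by
  induction k with
  | zero => simp
  | succ k ih =>
    have := ha k.le_succ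
    push_cast
    nlinarith [k.cast_nonneg (α := ℝ)]

lemma HasDerivAt.eq_zero_of_eqOn_zero {f : ℝ → ℝ} {f' x : ℝ} {S : Set ℝ} (hf : HasDerivAt f f' x)
    (hS : UniqueDiffWithinAt ℝ S x) (hx : x ∈ S) (h0 : Set.EqOn f 0 S) : f' = 0 :=
  hS.eq_deriv S hf.hasDerivWithinAt ((hasDerivWithinAt_const x S 0).congr h0 (h0 hx))

lemma pos_of_deriv_pos {f : ℝ → ℝ} (hf : Differentiable ℝ f) (h0 : f 0 = 0)
    (hf' : ∀ x > 0, 0 < deriv f x) (x : ℝ) (hx : 0 < x) : 0 < f x :=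
  h0 ▸ strictMonoOn_of_deriv_pos (convex_Ici 0) hf.continuous.continuousOn (by simpa using hf')
    Set.self_mem_Ici hx.le hx

lemma deriv_mul_sub_pos_of_deriv_div_neg {g1 g2 : ℝ → ℝ} {x : ℝ} (hg1 : DifferentiableAt ℝ g1 x)
    (hg2 : DifferentiableAt ℝ g2 x) (hx : g2 x ≠ 0) (hdiv : deriv (fun y => g1 y / g2 y) x < 0) :
    0 < deriv g2 x * g1 x - deriv g1 x * g2 x := by
  change deriv (g1 / g2) x < 0 at hdiv
  rw [(hg1.hasDerivAt.div hg2.hasDerivAt hx).deriv, div_neg_iff] at hdiv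
  rcases hdiv with ⟨-, hsq⟩ | ⟨hnum, -⟩
  · exact absurd hsq (sq_nonneg _).not_gt
  · linarith

lemma exists_pos_bound_of_ratio_bounds {g d F : ℝ → ℝ} (hg : StrictAntiOn g (Set.Ioi 0))
    (hsurj : ∀ y > 0, ∃ x > 0, g x = y) (hd : MonotoneOn d (Set.Ioi 0))
    (hF : ContinuousOn F (Set.Ioi 0)) {a b : ℝ} (ha : 0 < a) :
    ∃ C > 0, ∀ α ∈ Set.Icc a b, ∀ x > 0, α ≤ g x → g x ≤ α * (1 + d x) → F x ≤ C := by
  obtain ⟨M, hM, hgM⟩ := hsurj (a / 2) (by positivity)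
  obtain ⟨m, hm, hgm⟩ := hsurj (|b * (1 + d M)| + 1) (by positivity)
  obtain ⟨C, hC⟩ := (isCompact_Icc (a := m) (b := M)).bddAbove_image
    (hF.mono fun x hx => hm.trans_le hx.1)
  refine ⟨max C 1, by positivity, fun α hα x hx hlow hhigh => ?_⟩
  have hα0 : 0 < α := ha.trans_le hα.1
  have hxM : x ≤ M := by
    by_contra! hMx
    linarith [hg hM hx hMx, hα.1]
  have hmx : m ≤ x := by
    by_contra! hxm
    have hdx : 0 ≤ 1 + d x := by nlinarith
    have : g x ≤ b * (1 + d M) := calc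
      g x ≤ α * (1 + d x) := hhigh
      _ ≤ b * (1 + d x) := by gcongr; exact hα.2
      _ ≤ b * (1 + d M) := by gcongr; exacts [hα0.le.trans hα.2, hd hx hM hxM]
    linarith [hg hx hm hxm, le_abs_self (b * (1 + d M))]
  exact (hC ⟨x, ⟨hmx, hxM⟩, rfl⟩).trans (le_max_left _ _)

lemma exists_pos_bound_of_quotient_bounds {g1 g2 : ℝ → ℝ} (hg1 : ContDiff ℝ 1 g1)
    (hg2 : ContDiff ℝ 1 g2) (hg2pos : ∀ x > 0, 0 < g2 x)
    (hQ : ∀ x > 0, 0 < deriv g2 x * g1 x - deriv g1 x * g2 x)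
    (hdec : ∀ x > 0, deriv (fun y => g1 y / g2 y) x < 0)
    (hsurj : ∀ y > 0, ∃ x > 0, g1 x / g2 x = y) (hg1' : MonotoneOn (deriv g1) (Set.Ioi 0))
    {a b : ℝ} (ha : 0 < a) :
    ∃ C > 0, ∀ α ∈ Set.Icc a b, ∀ x > 0, α ≤ g1 x / g2 x →
      g1 x / g2 x ≤ α * (1 + deriv g1 x) →
        g1 x * g2 x / (deriv g2 x * g1 x - deriv g1 x * g2 x) ≤ C := by
  have hg2ne : ∀ x ∈ Set.Ioi (0 : ℝ), g2 x ≠ 0 := fun x hx => (hg2pos x hx).ne'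
  refine exists_pos_bound_of_ratio_bounds ?_ hsurj hg1' ?_ ha
  · exact strictAntiOn_of_deriv_neg (convex_Ioi 0)
      (hg1.continuous.continuousOn.div hg2.continuous.continuousOn hg2ne) (by simpa using hdec)
  · exact ((hg1.continuous.mul hg2.continuous).continuousOn).div
      ((((hg2.continuous_deriv le_rfl).mul hg1.continuous).sub
        ((hg1.continuous_deriv le_rfl).mul hg2.continuous)).continuousOn)
      fun x hx => (hQ x hx).ne'

noncomputable def U' (g1 : ℝ → ℝ) (h : ℝ) : ℕ → ℝ → ℝ
  | 0, _ => 1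
  | 1, _ => 1
  | 2, u => 1 + h ^ 2 / 2 * deriv g1 u
  | k + 3, u => 2 * U' g1 h (k + 2) u - U' g1 h (k + 1) u
      + h ^ 2 * deriv g1 (U g1 h (k + 2) u) * U' g1 h (k + 2) u

/-- The weight of `g₁(u_{k+1})` in `u_{k+2} - 2 u_{k+1} + u_k`: with the ghost value `u₀ := u₁`,
the first equation of (S) is the case `k = 0`, with half the weight. -/
noncomputable def stepWeight (h : ℝ) (k : ℕ) : ℝ := if k = 0 then h ^ 2 / 2 else h ^ 2

lemma stepWeight_nonneg (h : ℝ) (k : ℕ) : 0 ≤ stepWeight h k := by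
  unfold stepWeight; split_ifs <;> positivity

lemma U_add_two (g1 : ℝ → ℝ) (h : ℝ) (k : ℕ) (u : ℝ) :
    U g1 h (k + 2) u
      = 2 * U g1 h (k + 1) u - U g1 h k u + stepWeight h k * g1 (U g1 h (k + 1) u) := by
  rcases k with _ | k
  · simp only [U, stepWeight, ↓reduceIte]; ring
  · simp [U, stepWeight]

lemma U'_add_two (g1 : ℝ → ℝ) (h : ℝ) (k : ℕ) (u : ℝ) :
    U' g1 h (k + 2) u = 2 * U' g1 h (k + 1) u - U' g1 h k u
      + stepWeight h k * deriv g1 (U g1 h (k + 1) u) * U' g1 h (k + 1) u := by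
  rcases k with _ | k
  · simp only [U, U', stepWeight, ↓reduceIte]; ring
  · simp [U', stepWeight]

lemma hasDerivAt_U {g1 : ℝ → ℝ} (hg1 : Differentiable ℝ g1) (h : ℝ) (k : ℕ) (u : ℝ) :
    HasDerivAt (U g1 h k) (U' g1 h k u) u := by
  induction k using Nat.twoStepInduction with
  | zero => simpa [U, U'] using hasDerivAt_id' u
  | one => simpa [U, U'] using hasDerivAt_id' u
  | more k ih₀ ih₁ =>
    rw [show U g1 h (k + 2) = fun v => 2 * U g1 h (k + 1) v - U g1 h k v
      + stepWeight h k * g1 (U g1 h (k + 1) v) from funext (U_add_two g1 h k), U'_add_two]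
    exact (((ih₁.const_mul 2).sub ih₀).add
      (((hg1 _).hasDerivAt.comp u ih₁).const_mul (stepWeight h k))).congr_deriv (by ring)

section Shooting

variable {g1 : ℝ → ℝ} {h s : ℝ} {k : ℕ}

lemma U_increment_le_increment (hg : 0 ≤ g1 (U g1 h (k + 1) s)) :
    U g1 h (k + 1) s - U g1 h k s ≤ U g1 h (k + 2) s - U g1 h (k + 1) s := by
  rw [U_add_two]
  nlinarith [mul_nonneg (stepWeight_nonneg h k) hg]

private lemma self_le_U_and_le_succ (hg1 : ∀ x > 0, 0 ≤ g1 x) (hs : 0 < s) (k : ℕ) :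
    s ≤ U g1 h k s ∧ U g1 h k s ≤ U g1 h (k + 1) s := by
  induction k with
  | zero => simp [U]
  | succ k ih =>
    have hsk := ih.1.trans ih.2
    exact ⟨hsk, by linarith [ih.2, U_increment_le_increment (hg1 _ (hs.trans_le hsk))]⟩

lemma self_le_U (hg1 : ∀ x > 0, 0 ≤ g1 x) (hs : 0 < s) (k : ℕ) : s ≤ U g1 h k s :=
  (self_le_U_and_le_succ hg1 hs k).1

lemma monotone_U (hg1 : ∀ x > 0, 0 ≤ g1 x) (hs : 0 < s) : Monotone fun k => U g1 h k s :=
  monotone_nat_of_le_succ fun k => (self_le_U_and_le_succ hg1 hs k).2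

lemma monotone_U_increment (hg1 : ∀ x > 0, 0 ≤ g1 x) (hs : 0 < s) :
    Monotone fun k => U g1 h (k + 1) s - U g1 h k s :=
  monotone_nat_of_le_succ fun _ =>
    U_increment_le_increment (hg1 _ (hs.trans_le (self_le_U hg1 hs _)))

private lemma one_le_U'_and_le_succ (hg1 : ∀ x > 0, 0 ≤ g1 x) (hg1' : ∀ x > 0, 0 ≤ deriv g1 x)
    (hs : 0 < s) (k : ℕ) : 1 ≤ U' g1 h k s ∧ U' g1 h k s ≤ U' g1 h (k + 1) s := by
  induction k with
  | zero => simp [U']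
  | succ k ih =>
    have h1 := ih.1.trans ih.2
    have hd := hg1' _ (hs.trans_le (self_le_U (h := h) hg1 hs (k + 1)))
    refine ⟨h1, ?_⟩
    rw [U'_add_two]
    nlinarith [mul_nonneg (mul_nonneg (stepWeight_nonneg h k) hd) (zero_le_one.trans h1)]

lemma one_le_U' (hg1 : ∀ x > 0, 0 ≤ g1 x) (hg1' : ∀ x > 0, 0 ≤ deriv g1 x) (hs : 0 < s)
    (k : ℕ) : 1 ≤ U' g1 h k s :=
  (one_le_U'_and_le_succ hg1 hg1' hs k).1

lemma monotone_U' (hg1 : ∀ x > 0, 0 ≤ g1 x) (hg1' : ∀ x > 0, 0 ≤ deriv g1 x) (hs : 0 < s) :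
    Monotone fun k => U' g1 h k s :=
  monotone_nat_of_le_succ fun k => (one_le_U'_and_le_succ hg1 hg1' hs k).2

lemma U_increment_bounds (hg1 : MonotoneOn g1 (Set.Ioi 0)) (hg1nn : ∀ x > 0, 0 ≤ g1 x)
    (hs : 0 < s) (hk : 1 ≤ k) :
    h ^ 2 * (k - 1 / 2) * g1 s ≤ U g1 h (k + 1) s - U g1 h k s ∧
      U g1 h (k + 1) s - U g1 h k s ≤ h ^ 2 * (k - 1 / 2) * g1 (U g1 h k s) := by
  induction k, hk using Nat.le_induction with
  | base =>
    have hU₂ : U g1 h (1 + 1) s - U g1 h 1 s = h ^ 2 * (((1 : ℕ) : ℝ) - 1 / 2) * g1 s := by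
      simp only [U]; push_cast; ring
    exact ⟨hU₂.ge, hU₂.le⟩
  | succ k hk ih =>
    have hU := self_le_U (h := h) hg1nn hs
    have hgs : g1 s ≤ g1 (U g1 h (k + 1) s) := hg1 hs (hs.trans_le (hU _)) (hU _)
    have hgk : g1 (U g1 h k s) ≤ g1 (U g1 h (k + 1) s) :=
      hg1 (hs.trans_le (hU _)) (hs.trans_le (hU _)) (monotone_U hg1nn hs k.le_succ)
    have hstep : U g1 h (k + 2) s - U g1 h (k + 1) s
        = U g1 h (k + 1) s - U g1 h k s + h ^ 2 * g1 (U g1 h (k + 1) s) := by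
      rw [U_add_two, stepWeight, if_neg (by omega)]; ring
    have hk' : (0 : ℝ) ≤ k - 1 / 2 := by
      have : (1 : ℝ) ≤ k := by exact_mod_cast hk
      linarith
    push_cast
    rw [hstep]
    constructor
    · nlinarith [mul_le_mul_of_nonneg_left hgs (sq_nonneg h)]
    · nlinarith [mul_le_mul_of_nonneg_left hgk (mul_nonneg (sq_nonneg h) hk')]

lemma U'_succ_mul_le (hg1d : Differentiable ℝ g1) (hg1 : ConvexOn ℝ (Set.Ioi 0) g1)
    (hg1nn : ∀ x > 0, 0 ≤ g1 x) (hg1' : ∀ x > 0, 0 ≤ deriv g1 x) (hs : 0 < s) (k : ℕ) :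
    U' g1 h (k + 1) s * g1 (U g1 h k s) ≤ U' g1 h k s * g1 (U g1 h (k + 1) s) := by
  induction k with
  | zero => simp [U, U']
  | succ k ih =>
    have hU : ∀ j, U g1 h j s ∈ Set.Ioi 0 := fun j => hs.trans_le (self_le_U hg1nn hs j)
    have hw := zero_le_one.trans (one_le_U' (h := h) hg1nn hg1' hs (k + 1))
    have htan₁ := hg1.add_deriv_mul_sub_le (hU (k + 1)) (hU (k + 2)) (hg1d _)
    have htan₂ := hg1.add_deriv_mul_sub_le (hU (k + 1)) (hU k) (hg1d _)
    have hconv : stepWeight h k * deriv g1 (U g1 h (k + 1) s) * g1 (U g1 h (k + 1) s)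
        ≤ g1 (U g1 h (k + 2) s) - 2 * g1 (U g1 h (k + 1) s) + g1 (U g1 h k s) := by
      have hsecond : deriv g1 (U g1 h (k + 1) s) * (U g1 h (k + 2) s - U g1 h (k + 1) s)
          + deriv g1 (U g1 h (k + 1) s) * (U g1 h k s - U g1 h (k + 1) s)
          = stepWeight h k * deriv g1 (U g1 h (k + 1) s) * g1 (U g1 h (k + 1) s) := by
        rw [U_add_two]; ring
      linarith
    rw [U'_add_two]
    nlinarith [mul_le_mul_of_nonneg_left hconv hw]

end Shooting

section Boundary

variable {g1 g2 : ℝ → ℝ} {h s α : ℝ} {k : ℕ}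

lemma IsSolution.boundary_eq (hsol : IsSolution g1 g2 (k + 1) h α fun j => U g1 h j s) :
    U g1 h (k + 1) s - U g1 h k s + h ^ 2 / 2 * g1 (U g1 h (k + 1) s)
      = h * α * g2 (U g1 h (k + 1) s) := by
  simpa using hsol.2.2.2

lemma boundary_flux_bounds (hg1 : MonotoneOn g1 (Set.Ioi 0)) (hg1nn : ∀ x > 0, 0 ≤ g1 x)
    (hs : 0 < s) (hk : 1 ≤ k) (hhk : h * k = 1)
    (hbc : U g1 h (k + 1) s - U g1 h k s + h ^ 2 / 2 * g1 (U g1 h (k + 1) s)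
      = h * α * g2 (U g1 h (k + 1) s)) :
    g1 s ≤ α * g2 (U g1 h (k + 1) s) ∧ α * g2 (U g1 h (k + 1) s) ≤ g1 (U g1 h (k + 1) s) := by
  have hh : 0 < h := by
    have : (0 : ℝ) < k := by exact_mod_cast hk
    nlinarith
  have hU := self_le_U (h := h) hg1nn hs
  have hgs : g1 s ≤ g1 (U g1 h (k + 1) s) := hg1 hs (hs.trans_le (hU _)) (hU _)
  have hgk : g1 (U g1 h k s) ≤ g1 (U g1 h (k + 1) s) :=
    hg1 (hs.trans_le (hU _)) (hs.trans_le (hU _)) (monotone_U hg1nn hs k.le_succ)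
  have hk' : (0 : ℝ) ≤ k - 1 / 2 := by
    have : (1 : ℝ) ≤ k := by exact_mod_cast hk
    linarith
  obtain ⟨hlow, hhigh⟩ := U_increment_bounds hg1 hg1nn hs (h := h) hk
  have hweights : h ^ 2 * (k - 1 / 2) + h ^ 2 / 2 = h := by linear_combination h * hhk
  have hx : ∀ y, h * y = h ^ 2 * (k - 1 / 2) * y + h ^ 2 / 2 * y := fun y => by
    linear_combination -y * hweights
  constructor
  · refine le_of_mul_le_mul_left ?_ hh
    linarith [hx (g1 s), mul_le_mul_of_nonneg_left hgs (by positivity : (0 : ℝ) ≤ h ^ 2 / 2)]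
  · refine le_of_mul_le_mul_left ?_ hh
    linarith [hx (g1 (U g1 h (k + 1) s)),
      mul_le_mul_of_nonneg_left hgk (mul_nonneg (sq_nonneg h) hk')]

lemma U_sub_le_boundary_flux (hg1nn : ∀ x > 0, 0 ≤ g1 x) (hs : 0 < s) (hhk : h * k = 1)
    (hbc : U g1 h (k + 1) s - U g1 h k s + h ^ 2 / 2 * g1 (U g1 h (k + 1) s)
      = h * α * g2 (U g1 h (k + 1) s)) :
    U g1 h (k + 1) s - s ≤ α * g2 (U g1 h (k + 1) s) := by
  have hgap := sub_le_mul_increment_of_monotone (a := fun j => U g1 h j s)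
    (monotone_U_increment hg1nn hs) k
  have hgx := hg1nn _ (hs.trans_le (self_le_U (h := h) hg1nn hs (k + 1)))
  have hflux : U g1 h (k + 1) s - U g1 h k s ≤ h * α * g2 (U g1 h (k + 1) s) := by
    nlinarith [mul_nonneg (sq_nonneg h) hgx]
  calc U g1 h (k + 1) s - s ≤ k * (U g1 h (k + 1) s - U g1 h k s) := hgap
    _ ≤ k * (h * α * g2 (U g1 h (k + 1) s)) := by gcongr
    _ = α * g2 (U g1 h (k + 1) s) := by linear_combination α * g2 (U g1 h (k + 1) s) * hhk

lemma boundary_ratio_bounds (hg1d : Differentiable ℝ g1) (hg1 : ConvexOn ℝ (Set.Ioi 0) g1)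
    (hg1nn : ∀ x > 0, 0 ≤ g1 x)
    (hg1' : ∀ x > 0, 0 ≤ deriv g1 x) (hg2 : ∀ x > 0, 0 < g2 x) (hs : 0 < s) (hk : 1 ≤ k)
    (hhk : h * k = 1)
    (hbc : U g1 h (k + 1) s - U g1 h k s + h ^ 2 / 2 * g1 (U g1 h (k + 1) s)
      = h * α * g2 (U g1 h (k + 1) s)) :
    α ≤ g1 (U g1 h (k + 1) s) / g2 (U g1 h (k + 1) s) ∧
      g1 (U g1 h (k + 1) s) / g2 (U g1 h (k + 1) s) ≤ α * (1 + deriv g1 (U g1 h (k + 1) s)) := by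
  set x := U g1 h (k + 1) s
  have hsx : s ≤ x := self_le_U hg1nn hs _
  have hx : 0 < x := hs.trans_le hsx
  have hg1mono : MonotoneOn g1 (Set.Ioi 0) := monotoneOn_of_deriv_nonneg (convex_Ioi 0)
    hg1d.continuous.continuousOn hg1d.differentiableOn (by simpa using hg1')
  obtain ⟨hlow, hhigh⟩ := boundary_flux_bounds hg1mono hg1nn hs hk hhk hbc
  have hgap := U_sub_le_boundary_flux hg1nn hs hhk hbc
  have htan := hg1.add_deriv_mul_sub_le hx hs (hg1d x)
  constructor
  · rwa [le_div_iff₀ (hg2 x hx)]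
  · rw [div_le_iff₀ (hg2 x hx)]
    nlinarith [mul_le_mul_of_nonneg_left hgap (hg1' x hx)]

lemma residual_slope_mul_le (hg1d : Differentiable ℝ g1) (hg1 : ConvexOn ℝ (Set.Ioi 0) g1)
    (hg1nn : ∀ x > 0, 0 ≤ g1 x) (hg1' : ∀ x > 0, 0 ≤ deriv g1 x) (hs : 0 < s)
    (hbc : U g1 h (k + 1) s - U g1 h k s + h ^ 2 / 2 * g1 (U g1 h (k + 1) s)
      = h * α * g2 (U g1 h (k + 1) s)) :
    (U' g1 h (k + 1) s - U' g1 h k s + h ^ 2 / 2 * deriv g1 (U g1 h (k + 1) s) * U' g1 h (k + 1) s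
        - h * α * deriv g2 (U g1 h (k + 1) s) * U' g1 h (k + 1) s) * g1 (U g1 h (k + 1) s)
      ≤ -(h * α * U' g1 h (k + 1) s * (deriv g2 (U g1 h (k + 1) s) * g1 (U g1 h (k + 1) s)
        - deriv g1 (U g1 h (k + 1) s) * g2 (U g1 h (k + 1) s))) := by
  have hU : ∀ j, U g1 h j s ∈ Set.Ioi 0 := fun j => hs.trans_le (self_le_U hg1nn hs j)
  have hw := zero_le_one.trans (one_le_U' (h := h) hg1nn hg1' hs (k + 1))
  have hratio := U'_succ_mul_le (h := h) hg1d hg1 hg1nn hg1' hs k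
  have htan := hg1.add_deriv_mul_sub_le (hU (k + 1)) (hU k) (hg1d _)
  have hbc' := congrArg (· * (U' g1 h (k + 1) s * deriv g1 (U g1 h (k + 1) s))) hbc
  linarith [mul_le_mul_of_nonneg_left htan hw]

lemma hasDerivAt_boundary_residual (hg1d : Differentiable ℝ g1) (hg2d : Differentiable ℝ g2)
    {ψ : ℝ → ℝ} {ψ' : ℝ} (hψ : HasDerivAt ψ ψ' α) :
    HasDerivAt (fun β => U g1 h (k + 1) (ψ β) - U g1 h k (ψ β)
        + h ^ 2 / 2 * g1 (U g1 h (k + 1) (ψ β)) - h * β * g2 (U g1 h (k + 1) (ψ β)))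
      ((U' g1 h (k + 1) (ψ α) - U' g1 h k (ψ α)
        + h ^ 2 / 2 * deriv g1 (U g1 h (k + 1) (ψ α)) * U' g1 h (k + 1) (ψ α)
        - h * α * deriv g2 (U g1 h (k + 1) (ψ α)) * U' g1 h (k + 1) (ψ α)) * ψ'
        - h * g2 (U g1 h (k + 1) (ψ α))) α := by
  have hx := (hasDerivAt_U hg1d h (k + 1) (ψ α)).comp α hψ
  have hx' := (hasDerivAt_U hg1d h k (ψ α)).comp α hψ
  have hg1x := (hg1d _).hasDerivAt.comp α hx
  have hg2x := (hg2d _).hasDerivAt.comp α hx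
  exact (((hx.sub hx').add (hg1x.const_mul (h ^ 2 / 2))).sub
    (((hasDerivAt_id α).const_mul h).mul hg2x)).congr_deriv (by simp only [Function.comp, id]; ring)

end Boundary

section Sensitivity

variable {g1 g2 : ℝ → ℝ} {h α : ℝ} {k : ℕ} {ψ : ℝ → ℝ}

lemma norm_deriv_shooting_le (hg1d : Differentiable ℝ g1) (hg1nn : ∀ x > 0, 0 ≤ g1 x)
    (hg1' : ∀ x > 0, 0 ≤ deriv g1 x) {ψ' : ℝ} (hψ : HasDerivAt ψ ψ' α) (hs : 0 < ψ α) (n : ℕ) :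
    ‖deriv (fun β => fun j : Fin n => U g1 h ((j : ℕ) + 1) (ψ β)) α‖ ≤ U' g1 h n (ψ α) * |ψ'| := by
  have hw := one_le_U' (h := h) hg1nn hg1' hs
  have hφ : HasDerivAt (fun β => fun j : Fin n => U g1 h ((j : ℕ) + 1) (ψ β))
      (fun j => U' g1 h ((j : ℕ) + 1) (ψ α) * ψ') α :=
    hasDerivAt_pi.2 fun j => (hasDerivAt_U hg1d h _ _).comp α hψ
  rw [hφ.deriv]
  refine (pi_norm_le_iff_of_nonneg (mul_nonneg (zero_le_one.trans (hw n)) (abs_nonneg _))).2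
    fun j => ?_
  rw [Real.norm_eq_abs, abs_mul, abs_of_nonneg (zero_le_one.trans (hw _))]
  exact mul_le_mul_of_nonneg_right (monotone_U' hg1nn hg1' hs j.2) (abs_nonneg _)

lemma mul_norm_deriv_shooting_le (hg1d : Differentiable ℝ g1) (hg2d : Differentiable ℝ g2)
    (hg1 : ConvexOn ℝ (Set.Ioi 0) g1) (hg1pos : ∀ x > 0, 0 < g1 x)
    (hg1' : ∀ x > 0, 0 ≤ deriv g1 x) (hg2pos : ∀ x > 0, 0 < g2 x)
    (hQ : ∀ x > 0, 0 < deriv g2 x * g1 x - deriv g1 x * g2 x) {a b : ℝ} (hab : a < b) (hh : 0 < h)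
    (hsol : ∀ β ∈ Set.Icc a b, IsSolution g1 g2 (k + 1) h β fun j => U g1 h j (ψ β))
    (hα : α ∈ Set.Icc a b) (hα0 : 0 < α)
    (hdiff : DifferentiableAt ℝ (fun β => fun j : Fin (k + 1) => U g1 h ((j : ℕ) + 1) (ψ β)) α) :
    α * ‖deriv (fun β => fun j : Fin (k + 1) => U g1 h ((j : ℕ) + 1) (ψ β)) α‖
      ≤ g1 (U g1 h (k + 1) (ψ α)) * g2 (U g1 h (k + 1) (ψ α))
        / (deriv g2 (U g1 h (k + 1) (ψ α)) * g1 (U g1 h (k + 1) (ψ α))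
          - deriv g1 (U g1 h (k + 1) (ψ α)) * g2 (U g1 h (k + 1) (ψ α))) := by
  have hg1nn : ∀ x > 0, 0 ≤ g1 x := fun x hx => (hg1pos x hx).le
  have hs : 0 < ψ α := (hsol α hα).1 1 le_rfl (by omega)
  have hψ : HasDerivAt ψ (deriv ψ α) α := (differentiableAt_pi.1 hdiff 0).hasDerivAt
  have hbc := fun β hβ => (hsol β hβ).boundary_eq
  have hslope := (hasDerivAt_boundary_residual (h := h) (k := k) hg1d hg2d hψ).eq_zero_of_eqOn_zero
    (uniqueDiffOn_Icc hab α hα) hα fun β hβ => sub_eq_zero.2 (hbc β hβ)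
  have hD := residual_slope_mul_le hg1d hg1 hg1nn hg1' hs (hbc α hα)
  have hnorm := norm_deriv_shooting_le (h := h) hg1d hg1nn hg1' hψ hs (k + 1)
  set x := U g1 h (k + 1) (ψ α)
  have hx : 0 < x := hs.trans_le (self_le_U hg1nn hs _)
  have hw : 1 ≤ U' g1 h (k + 1) (ψ α) := one_le_U' hg1nn hg1' hs _
  set D := U' g1 h (k + 1) (ψ α) - U' g1 h k (ψ α) + h ^ 2 / 2 * deriv g1 x * U' g1 h (k + 1) (ψ α)
    - h * α * deriv g2 x * U' g1 h (k + 1) (ψ α)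
  have hQx := hQ x hx
  have hDneg : D < 0 := by
    refine neg_of_mul_neg_left (hD.trans_lt ?_) (hg1pos x hx).le
    have := mul_pos (mul_pos (mul_pos hh hα0) (zero_lt_one.trans_le hw)) hQx
    linarith
  have hψ' : deriv ψ α < 0 := by
    refine neg_of_mul_pos_right ?_ hDneg.le
    linarith [mul_pos hh (hg2pos x hx)]
  calc α * ‖deriv (fun β => fun j : Fin (k + 1) => U g1 h ((j : ℕ) + 1) (ψ β)) α‖
      ≤ α * (U' g1 h (k + 1) (ψ α) * |deriv ψ α|) := mul_le_mul_of_nonneg_left hnorm hα0.le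
    _ ≤ g1 x * g2 x / (deriv g2 x * g1 x - deriv g1 x * g2 x) := by
      rw [abs_of_neg hψ', le_div_iff₀ hQx]
      refine le_of_mul_le_mul_left ?_ hh
      have hslope' := congrArg (· * g1 x) hslope
      simp only [zero_mul] at hslope'
      linarith [mul_le_mul_of_nonneg_right hD (neg_nonneg.2 hψ'.le)]

end Sensitivity

theorem stmt19_general
    (g1 g2 : ℝ → ℝ)
    (hg1C : ContDiff ℝ 3 g1) (hg2C : ContDiff ℝ 3 g2)
    (hg10 : g1 0 = 0) (hg20 : g2 0 = 0)
    (hg1d1 : ∀ x > 0, 0 < deriv g1 x) (hg2d1 : ∀ x > 0, 0 < deriv g2 x)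
    (hg1d2 : ∀ x > 0, 0 < iteratedDeriv 2 g1 x)
    (hsurj : ∀ y > (0 : ℝ), ∃ x > (0 : ℝ), g1 x / g2 x = y)
    (hdec : ∀ x > (0 : ℝ), deriv (fun y => g1 y / g2 y) x < 0)
    (αs αe : ℝ) (hαs : 0 < αs) (hαse : αs < αe) :
    ∃ κ1 > (0 : ℝ), ∀ (n : ℕ), 2 ≤ n → ∀ u1fun : ℝ → ℝ,
      (∀ α ∈ Set.Icc αs αe, 0 < u1fun α ∧
        IsSolution g1 g2 n (1 / ((n : ℝ) - 1)) α
          (fun k => U g1 (1 / ((n : ℝ) - 1)) k (u1fun α))) →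
      ∀ α ∈ Set.Icc αs αe,
        ‖deriv (fun β => fun k : Fin n =>
            U g1 (1 / ((n : ℝ) - 1)) ((k : ℕ) + 1) (u1fun β)) α‖ < κ1 := by
  have hg1d : Differentiable ℝ g1 := hg1C.differentiable (by norm_num)
  have hg2d : Differentiable ℝ g2 := hg2C.differentiable (by norm_num)
  have hg1pos := pos_of_deriv_pos hg1d hg10 hg1d1
  have hg2pos := pos_of_deriv_pos hg2d hg20 hg2d1
  have hg1nn : ∀ x > 0, 0 ≤ g1 x := fun x hx => (hg1pos x hx).le
  have hg1'nn : ∀ x > 0, 0 ≤ deriv g1 x := fun x hx => (hg1d1 x hx).le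
  have hg1' : StrictMonoOn (deriv g1) (Set.Ioi 0) :=
    strictMonoOn_of_deriv_pos (convex_Ioi 0) (hg1C.continuous_deriv (by norm_num)).continuousOn
      (by simpa [iteratedDeriv_succ] using hg1d2)
  have hg1conv : ConvexOn ℝ (Set.Ioi 0) g1 := MonotoneOn.convexOn_of_deriv (convex_Ioi 0)
    hg1d.continuous.continuousOn hg1d.differentiableOn (by simpa using hg1'.monotoneOn)
  have hQ : ∀ x > 0, 0 < deriv g2 x * g1 x - deriv g1 x * g2 x := fun x hx =>
    deriv_mul_sub_pos_of_deriv_div_neg (hg1d x) (hg2d x) (hg2pos x hx).ne' (hdec x hx)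
  obtain ⟨C, hC0, hC⟩ := exists_pos_bound_of_quotient_bounds (hg1C.of_le (by norm_num))
    (hg2C.of_le (by norm_num)) hg2pos hQ hdec hsurj hg1'.monotoneOn hαs (b := αe)
  refine ⟨C / αs + 1, by positivity, fun n hn ψ hsol α hα => ?_⟩
  obtain ⟨k, rfl⟩ : ∃ k, n = k + 1 := ⟨n - 1, by omega⟩
  have hk : 1 ≤ k := by omega
  have hh : 0 < 1 / (((k + 1 : ℕ) : ℝ) - 1) := by
    rw [Nat.cast_add_one, add_sub_cancel_right]; exact one_div_pos.2 (Nat.cast_pos.2 hk)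
  have hhk : 1 / (((k + 1 : ℕ) : ℝ) - 1) * k = 1 := by
    rw [Nat.cast_add_one, add_sub_cancel_right, one_div_mul_cancel (Nat.cast_ne_zero.2 (by omega))]
  have hα0 : 0 < α := hαs.trans_le hα.1
  by_cases hdiff : DifferentiableAt ℝ
      (fun β => fun j : Fin (k + 1) => U g1 (1 / (((k + 1 : ℕ) : ℝ) - 1)) ((j : ℕ) + 1) (ψ β)) α
  swap
  · rw [deriv_zero_of_not_differentiableAt hdiff, norm_zero]; positivity
  have hs := (hsol α hα).1
  obtain ⟨hlow, hhigh⟩ := boundary_ratio_bounds hg1d hg1conv hg1nn hg1'nn hg2pos hs hk hhk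
    (hsol α hα).2.boundary_eq
  have hbound := hC α hα _ (hs.trans_le (self_le_U hg1nn hs _)) hlow hhigh
  have hderiv := mul_norm_deriv_shooting_le hg1d hg2d hg1conv hg1pos hg1'nn hg2pos hQ hαse hh
    (fun β hβ => (hsol β hβ).2) hα hα0 hdiff
  calc _ ≤ C / α := by rw [le_div_iff₀ hα0]; linarith
    _ ≤ C / αs := div_le_div_of_nonneg_left hC0.le hαs hα.1
    _ < C / αs + 1 := lt_add_one _

theorem stmt19
    (g1 g2 : ℝ → ℝ)
    (hg1C : ContDiff ℝ 3 g1) (hg2C : ContDiff ℝ 3 g2)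
    (hg1A : AnalyticAt ℝ g1 0) (hg2A : AnalyticAt ℝ g2 0)
    (hg10 : g1 0 = 0) (hg20 : g2 0 = 0)
    (hg1d1 : ∀ x > 0, 0 < deriv g1 x) (hg2d1 : ∀ x > 0, 0 < deriv g2 x)
    (hg1d2 : ∀ x > 0, 0 < iteratedDeriv 2 g1 x) (hg2d2 : ∀ x > 0, 0 < iteratedDeriv 2 g2 x)
    (hg1d3 : ∀ x > 0, 0 ≤ iteratedDeriv 3 g1 x) (hg2d3 : ∀ x > 0, 0 ≤ iteratedDeriv 3 g2 x)
    (hsurj : ∀ y > (0 : ℝ), ∃ x > (0 : ℝ), g1 x / g2 x = y)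
    (hdec : ∀ x > (0 : ℝ), deriv (fun y => g1 y / g2 y) x < 0)
    (αs αe : ℝ) (hαs : 0 < αs) (hαse : αs < αe) :
    ∃ κ1 > (0 : ℝ), ∀ (n : ℕ), 2 ≤ n → ∀ u1fun : ℝ → ℝ,
      (∀ α ∈ Set.Icc αs αe, 0 < u1fun α ∧
        IsSolution g1 g2 n (1 / ((n : ℝ) - 1)) α
          (fun k => U g1 (1 / ((n : ℝ) - 1)) k (u1fun α))) →
      ∀ α ∈ Set.Icc αs αe,
        ‖deriv (fun β => fun k : Fin n =>
            U g1 (1 / ((n : ℝ) - 1)) ((k : ℕ) + 1) (u1fun β)) α‖ < κ1 :=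
  stmt19_general g1 g2 hg1C hg2C hg10 hg20 hg1d1 hg2d1 hg1d2 hsurj hdec αs αe hαs hαse
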